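/- An element f of PLF(ℝ) is reversible in PLF(ℝ) (i.e., there exists h ∈ PLF(ℝ) with h ∘ f ∘ h⁻¹ = f⁻¹) if and only if f is strongly reversible in PLF(ℝ) (i.e., there exists an involution σ ∈ PLF(ℝ) with σ ∘ f ∘ σ = f⁻¹). -/

import Mathlib

/-- `f` is a homeomorphism of `ℝ`: a bijection of `ℝ` that is continuous in both directions. -/
def IsHomeo (f : Equiv.Perm ℝ) : Prop := Continuous f ∧ Continuous f.symm

/-- `f` is locally affine at `x`: it agrees with an affine map on a neighbourhood of `x`. -/
def IsLocallyAffineAt (f : ℝ → ℝ) (x : ℝ) : Prop :=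
  ∃ a b : ℝ, ∀ᶠ y in nhds x, f y = a * y + b

/-- Membership in PLF(ℝ): a homeomorphism of `ℝ` that is locally affine at all but
finitely many points. -/
def InPLF (f : Equiv.Perm ℝ) : Prop :=
  IsHomeo f ∧ {x : ℝ | ¬ IsLocallyAffineAt (⇑f) x}.Finite

/-- Membership in PL(ℝ): a homeomorphism of `ℝ` whose set of points of non-local-affinity
has no accumulation point in `ℝ`. -/
def InPL (f : Equiv.Perm ℝ) : Prop :=
  IsHomeo f ∧ ∀ x : ℝ, ¬ AccPt x (Filter.principal {y : ℝ | ¬ IsLocallyAffineAt (⇑f) y})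

/-!
Let `h f h⁻¹ = f⁻¹` in PLF(ℝ).

If `f` and `h` are both increasing, then `f = id`: at the supremum `s` of the support of `f`
both maps fix `s`, and writing `h = f ∘ h ∘ f` on their affine germs to the left of `s` forces the
germ of `f` to be the identity, contradicting the choice of `s` (the same computation at `+∞`
shows that the support is bounded above). If `f` is decreasing, this applies to `f²`, reversed by
`h` or by the increasing map `f h`; so `f` is an involution and `σ = 1` works.

In the remaining case `f` is increasing and `h` decreasing. Then `h` has a fixed point `p` and
`h²` commutes with `f`. A map in PLF(ℝ) commuting with a map `g` that has no fixed point in an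
interval, and fixing a point of that interval, is the identity there: otherwise the translates
under `g` of a fundamental domain would each contain a point where it is not locally affine.
Hence `h² = id` on the component `(u, v)` of `p` in the support of `f`, `h` swaps `u` and `v`,
and the map equal to `h` on `(-∞, v]` and to `h⁻¹` on `(v, ∞)` is an involution in PLF(ℝ)
reversing `f`. (If `f p = p`, take `v = p`; if `f` has no fixed point, `h` itself is an
involution.)
-/

open Set Filter Topology Equiv

lemma semiconjBy_of_reverses {G : Type*} [Group G] {f h : G} (hrev : h * f * h⁻¹ = f⁻¹) :
    SemiconjBy h f f⁻¹ := by
  rw [SemiconjBy, ← hrev]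
  group

lemma commute_mul_self_of_reverses {G : Type*} [Group G] {f h : G} (hrev : h * f * h⁻¹ = f⁻¹) :
    Commute (h * h) f := by
  have hs := semiconjBy_of_reverses hrev
  have hs' : SemiconjBy h f⁻¹ f := by simpa only [inv_inv] using hs.inv_right
  exact hs'.mul_left hs

lemma reverses_apply {α : Type*} {f h : Perm α} (hrev : h * f * h⁻¹ = f⁻¹) (x : α) :
    h (f x) = f⁻¹ (h x) :=
  DFunLike.congr_fun (semiconjBy_of_reverses hrev) x

lemma apply_eq_self_of_reverses {α : Type*} {f h : Perm α} (hrev : h * f * h⁻¹ = f⁻¹) {x : α}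
    (hx : f x = x) : f (h x) = h x :=
  Perm.eq_inv_iff_eq.1 (by simpa [hx] using reverses_apply hrev x)

lemma affine_coeff_eq {a b a' b' x₁ x₂ : ℝ} (hx : x₁ ≠ x₂)
    (h₁ : a * x₁ + b = a' * x₁ + b') (h₂ : a * x₂ + b = a' * x₂ + b') : a = a' ∧ b = b' := by
  have ha : a = a' := by
    have : (a - a') * (x₁ - x₂) = 0 := by linear_combination h₁ - h₂
    exact sub_eq_zero.1 ((mul_eq_zero.1 this).resolve_right (sub_ne_zero.2 hx))
  exact ⟨ha, by subst ha; linarith⟩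

lemma exists_lt_of_eventually {L : Filter ℝ} [L.NeBot] (hL : L ≤ cofinite) {P : ℝ → Prop}
    (h : ∀ᶠ x in L, P x) : ∃ x₁ x₂, x₁ < x₂ ∧ P x₁ ∧ P x₂ := by
  obtain ⟨x₁, hx₁⟩ := h.exists
  obtain ⟨x₂, hx₂, hne⟩ := (h.and (hL (eventually_cofinite_ne x₁))).exists
  rcases hne.lt_or_gt with hlt | hlt
  exacts [⟨x₂, x₁, hlt, hx₂, hx₁⟩, ⟨x₁, x₂, hlt, hx₁, hx₂⟩]

lemma affine_coeff_eq_of_eventually {L : Filter ℝ} [L.NeBot] (hL : L ≤ cofinite)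
    {a b a' b' : ℝ} (h : ∀ᶠ x in L, a * x + b = a' * x + b') : a = a' ∧ b = b' := by
  obtain ⟨x₁, x₂, hx, h₁, h₂⟩ := exists_lt_of_eventually hL h
  exact affine_coeff_eq hx.ne h₁ h₂

lemma slope_pos_of_strictMono {L : Filter ℝ} [L.NeBot] (hL : L ≤ cofinite) {f : ℝ → ℝ}
    (hf : StrictMono f) {a b : ℝ} (h : ∀ᶠ x in L, f x = a * x + b) : 0 < a := by
  obtain ⟨x₁, x₂, hx, h₁, h₂⟩ := exists_lt_of_eventually hL h
  have := hf hx
  rw [h₁, h₂] at this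
  nlinarith

lemma slope_ne_zero_of_injective {L : Filter ℝ} [L.NeBot] (hL : L ≤ cofinite) {f : ℝ → ℝ}
    (hf : Function.Injective f) {a b : ℝ} (h : ∀ᶠ x in L, f x = a * x + b) : a ≠ 0 := by
  rintro rfl
  obtain ⟨x₁, x₂, hx, h₁, h₂⟩ := exists_lt_of_eventually hL h
  exact hx.ne (hf (by rw [h₁, h₂]; ring))

def breakpoints (c : ℝ → ℝ) : Set ℝ :=
  {x | ¬IsLocallyAffineAt c x}

namespace IsLocallyAffineAt

lemma congr {f g : ℝ → ℝ} {x : ℝ} (hg : IsLocallyAffineAt g x) (h : f =ᶠ[𝓝 x] g) :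
    IsLocallyAffineAt f x := by
  obtain ⟨a, b, hab⟩ := hg
  exact ⟨a, b, h.mp (hab.mono fun y h₁ h₂ => h₂.trans h₁)⟩

lemma comp {f g : ℝ → ℝ} {x : ℝ} (hg : IsLocallyAffineAt g (f x))
    (hf : IsLocallyAffineAt f x) (hfc : ContinuousAt f x) : IsLocallyAffineAt (g ∘ f) x := by
  obtain ⟨a, b, hab⟩ := hf
  obtain ⟨c, d, hcd⟩ := hg
  refine ⟨c * a, c * b + d, ?_⟩
  filter_upwards [hab, hfc.eventually hcd] with y h₁ h₂
  rw [Function.comp_apply, h₂, h₁]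
  ring

lemma perm_inv {f : Perm ℝ} {x : ℝ} (hx : IsLocallyAffineAt f x) (hc : Continuous ⇑f⁻¹) :
    IsLocallyAffineAt ⇑f⁻¹ (f x) := by
  obtain ⟨a, b, hab⟩ := hx
  have ha : a ≠ 0 :=
    slope_ne_zero_of_injective (nhdsNE_le_cofinite x) f.injective (nhdsWithin_le_nhds hab)
  refine ⟨a⁻¹, -b / a, ?_⟩
  filter_upwards [(hc.tendsto' (f x) x (by simp)).eventually hab] with y hy
  rw [Perm.coe_inv, apply_symm_apply] at hy
  rw [Perm.coe_inv]
  field_simp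
  linarith

end IsLocallyAffineAt

lemma exists_affine_of_isPreconnected {S : Set ℝ} (hS : IsPreconnected S) {c : ℝ → ℝ}
    (hc : ∀ x ∈ S, IsLocallyAffineAt c x) : ∃ a b, ∀ x ∈ S, c x = a * x + b := by
  rcases S.eq_empty_or_nonempty with rfl | ⟨z, hz⟩
  · exact ⟨0, 0, fun _ => False.elim⟩
  have uniq : ∀ {x a b a' b' : ℝ}, (∀ᶠ y in 𝓝 x, c y = a * y + b) →
      (∀ᶠ y in 𝓝 x, c y = a' * y + b') → a = a' ∧ b = b' := fun h h' =>
    affine_coeff_eq_of_eventually (nhdsNE_le_cofinite _)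
      (nhdsWithin_le_nhds ((h.and h').mono fun _ hy => hy.1.symm.trans hy.2))
  let P x y := ∃ a b, (∀ᶠ t in 𝓝 x, c t = a * t + b) ∧ ∀ᶠ t in 𝓝 y, c t = a * t + b
  have hP : ∀ x ∈ S, P z x := fun x hx => hS.induction₂' P
    (fun x hx => by
      obtain ⟨a, b, hab⟩ := hc x hx
      filter_upwards [nhdsWithin_le_nhds hab.eventually_nhds] with y hy
      exact ⟨⟨a, b, hab, hy⟩, a, b, hy, hab⟩)
    (fun x y z _ _ _ ⟨a, b, hx, hy⟩ ⟨a', b', hy', hz⟩ => by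
      obtain ⟨rfl, rfl⟩ := uniq hy hy'
      exact ⟨a, b, hx, hz⟩) hz hx
  obtain ⟨a, b, hab⟩ := hc z hz
  refine ⟨a, b, fun x hx => ?_⟩
  obtain ⟨a', b', hz', hx'⟩ := hP x hx
  obtain ⟨rfl, rfl⟩ := uniq hab hz'
  exact hx'.self_of_nhds

lemma nhdsLT_le_cofinite (s : ℝ) : 𝓝[<] s ≤ cofinite :=
  (nhdsWithin_mono s fun _ hx => ne_of_lt hx).trans (nhdsNE_le_cofinite s)

lemma eventually_affine_atTop {c : ℝ → ℝ} (hc : (breakpoints c).Finite) :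
    ∃ a b, ∀ᶠ x in atTop, c x = a * x + b := by
  obtain ⟨R, hR⟩ := eventually_atTop.1 (atTop_le_cofinite hc.eventually_cofinite_notMem)
  obtain ⟨a, b, hab⟩ :=
    exists_affine_of_isPreconnected isPreconnected_Ici fun x hx => not_not.1 (hR x hx)
  exact ⟨a, b, eventually_atTop.2 ⟨R, hab⟩⟩

lemma eventually_affine_nhdsLT {c : ℝ → ℝ} (hc : (breakpoints c).Finite) (s : ℝ) :
    ∃ a b, ∀ᶠ x in 𝓝[<] s, c x = a * x + b := by
  obtain ⟨t, hts, ht⟩ :=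
    mem_nhdsLT_iff_exists_Ioo_subset.1 (nhdsLT_le_cofinite s hc.eventually_cofinite_notMem)
  obtain ⟨a, b, hab⟩ :=
    exists_affine_of_isPreconnected isPreconnected_Ioo fun x hx => not_not.1 (ht hx)
  exact ⟨a, b, eventually_of_mem (Ioo_mem_nhdsLT hts) hab⟩

/-- An affine map fixing `a < b` is the identity. -/
lemma exists_mem_breakpoints_of_fixed {c : ℝ → ℝ} (hc : Continuous c) {a b x : ℝ} (hab : a < b)
    (ha : c a = a) (hb : c b = b) (hx : x ∈ Ioo a b) (hcx : c x ≠ x) :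
    ∃ t ∈ Ioo a b, t ∈ breakpoints c := by
  by_contra! h
  obtain ⟨A, B, hAB⟩ :=
    exists_affine_of_isPreconnected isPreconnected_Ioo fun t ht => not_not.1 (h t ht)
  have hIcc : EqOn c (fun y => A * y + B) (Icc a b) :=
    EqOn.of_subset_closure hAB hc.continuousOn (by fun_prop) Ioo_subset_Icc_self
      (by rw [closure_Ioo hab.ne])
  have hA : c a = A * a + B := hIcc (left_mem_Icc.2 hab.le)
  have hB : c b = A * b + B := hIcc (right_mem_Icc.2 hab.le)
  obtain ⟨rfl, rfl⟩ :=
    affine_coeff_eq (a := A) (b := B) (a' := 1) (b' := 0) hab.ne (by linarith) (by linarith)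
  exact hcx (by rw [hAB x hx]; ring)

namespace InPLF

lemma one : InPLF 1 :=
  ⟨⟨continuous_id, continuous_id⟩, finite_empty.subset fun _ hx => hx ⟨1, 0, by simp⟩⟩

lemma mul {f g : Perm ℝ} (hf : InPLF f) (hg : InPLF g) : InPLF (f * g) := by
  refine ⟨⟨hf.1.1.comp hg.1.1, hg.1.2.comp hf.1.2⟩,
    (hg.2.union (hf.2.image g.symm)).subset fun x hx => ?_⟩
  by_cases hgx : IsLocallyAffineAt g x
  · exact Or.inr ⟨g x, fun hfx => hx (hfx.comp hgx hg.1.1.continuousAt), g.symm_apply_apply x⟩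
  · exact Or.inl hgx

lemma inv {f : Perm ℝ} (hf : InPLF f) : InPLF f⁻¹ := by
  refine ⟨⟨hf.1.2, hf.1.1⟩, (hf.2.image f).subset fun x hx => ⟨f⁻¹ x, fun h => hx ?_, by simp⟩⟩
  simpa using h.perm_inv hf.1.2

lemma strictMono_or_strictAnti {f : Perm ℝ} (hf : InPLF f) : StrictMono f ∨ StrictAnti f :=
  hf.1.1.strictMono_of_inj f.injective

end InPLF

/-- Comparing `h = f ∘ h ∘ f` on the affine germs `f = a x + b`, `h = c x + d` gives `c = a² c`
and `d = a c b + a d + b`, whence `a = 1` and `b = 0`. -/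
lemma eventually_eq_self_of_reverses {L : Filter ℝ} [L.NeBot] (hL : L ≤ cofinite)
    {f h : ℝ → ℝ} (hfm : StrictMono f) (hhm : StrictMono h) (hfL : Tendsto f L L)
    (hhL : Tendsto h L L) (hfa : ∃ a b, ∀ᶠ x in L, f x = a * x + b)
    (hha : ∃ c d, ∀ᶠ x in L, h x = c * x + d) (rev : ∀ x, h x = f (h (f x))) :
    ∀ᶠ x in L, f x = x := by
  obtain ⟨a, b, hab⟩ := hfa
  obtain ⟨c, d, hcd⟩ := hha
  have ha := slope_pos_of_strictMono hL hfm hab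
  have hc := slope_pos_of_strictMono hL hhm hcd
  have key : ∀ᶠ x in L, c * x + d = a * c * a * x + (a * c * b + a * d + b) := by
    filter_upwards [hab, hcd, hfL.eventually hcd, hfL.eventually (hhL.eventually hab)]
      with x h₁ h₂ h₃ h₄
    rw [← h₂, rev, h₄, h₃, h₁]
    ring
  obtain ⟨hca, hdb⟩ := affine_coeff_eq_of_eventually hL key
  obtain rfl : a = 1 := by
    have : (a - 1) * ((a + 1) * c) = 0 := by linear_combination -hca
    linarith [(mul_eq_zero.1 this).resolve_right (by positivity)]
  obtain rfl : b = 0 := by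
    have : b * (c + 1) = 0 := by linear_combination -hdb
    exact (mul_eq_zero.1 this).resolve_right (by positivity)
  filter_upwards [hab] with x hx
  rw [hx]
  ring

lemma tendsto_nhdsLT_of_strictMono {f : ℝ → ℝ} (hc : Continuous f) (hm : StrictMono f) {s : ℝ}
    (hs : f s = s) : Tendsto f (𝓝[<] s) (𝓝[<] s) := by
  have hmaps : MapsTo f (Iio s) (Iio s) := fun x (hx : x < s) => (hm hx).trans_eq hs
  simpa only [hs] using (hc.continuousWithinAt (x := s)).tendsto_nhdsWithin hmaps

lemma tendsto_atTop_of_strictMono {f : Perm ℝ} (hm : StrictMono f) : Tendsto f atTop atTop :=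
  tendsto_atTop_atTop_of_monotone hm.monotone fun y => ⟨f⁻¹ y, by simp⟩

lemma IsOpen.notMem_of_isLUB {S : Set ℝ} (hS : IsOpen S) {s : ℝ} (hs : IsLUB S s) : s ∉ S :=
  fun hsS => by
    have : ∀ᶠ y in 𝓝[>] s, y ∈ S := nhdsWithin_le_nhds (hS.mem_nhds hsS)
    obtain ⟨y, hyS, hsy⟩ := (this.and self_mem_nhdsWithin).exists
    exact (hs.1 hyS).not_gt hsy

lemma eq_one_of_reverses_of_strictMono {f h : Perm ℝ} (hf : InPLF f) (hh : InPLF h)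
    (hfm : StrictMono f) (hhm : StrictMono h) (hrev : h * f * h⁻¹ = f⁻¹) : f = 1 := by
  have rev : ∀ x, h x = f (h (f x)) := fun x =>
    (Perm.eq_inv_iff_eq.1 (reverses_apply hrev x)).symm
  by_contra hne
  obtain ⟨x₀, hx₀⟩ : ∃ x, f x ≠ x := by
    by_contra! hfix
    exact hne (Equiv.ext hfix)
  set S := {x | f x ≠ x}
  have hSh : ∀ x, h x ∈ S ↔ x ∈ S := fun x => not_congr
    ⟨fun hx => (h.injective (f.injective (hx.trans (rev x)))).symm,
      apply_eq_self_of_reverses hrev⟩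
  obtain ⟨R, hR⟩ := eventually_atTop.1 <| eventually_eq_self_of_reverses atTop_le_cofinite hfm
    hhm (tendsto_atTop_of_strictMono hfm) (tendsto_atTop_of_strictMono hhm)
    (eventually_affine_atTop hf.2) (eventually_affine_atTop hh.2) rev
  have hbdd : BddAbove S := ⟨R, fun x hx => not_lt.1 fun hlt => hx (hR x hlt.le)⟩
  set s := sSup S
  have hlub : IsLUB S s := isLUB_csSup ⟨x₀, hx₀⟩ hbdd
  have hfs : f s = s := not_not.1 ((isOpen_ne_fun hf.1.1 continuous_id).notMem_of_isLUB hlub)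
  have hhs : h s = s := by
    rw [hhm.monotone.map_csSup_of_continuousAt hh.1.1.continuousAt ⟨x₀, hx₀⟩ hbdd]
    congr 1
    ext y
    rw [image_eq_preimage_symm, mem_preimage, ← hSh, apply_symm_apply]
  obtain ⟨t, hts, ht⟩ := mem_nhdsLT_iff_exists_Ioo_subset.1 <| eventually_eq_self_of_reverses
    (nhdsLT_le_cofinite s) hfm hhm (tendsto_nhdsLT_of_strictMono hf.1.1 hfm hfs)
    (tendsto_nhdsLT_of_strictMono hh.1.1 hhm hhs) (eventually_affine_nhdsLT hf.2 s)
    (eventually_affine_nhdsLT hh.2 s) rev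
  obtain ⟨y, hyS, hty, hys⟩ := hlub.exists_between hts
  exact hyS (ht ⟨hty, hys.lt_of_ne fun hy => hyS (hy ▸ hfs)⟩)

lemma mul_self_eq_one_of_reverses_of_strictAnti {f h : Perm ℝ} (hf : InPLF f) (hh : InPLF h)
    (hfa : StrictAnti f) (hrev : h * f * h⁻¹ = f⁻¹) : f * f = 1 := by
  obtain ⟨k, hk, hkm, hkrev⟩ : ∃ k : Perm ℝ, InPLF k ∧ StrictMono k ∧ k * f * k⁻¹ = f⁻¹ := by
    rcases hh.strictMono_or_strictAnti with hhm | hha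
    · exact ⟨h, hh, hhm, hrev⟩
    · refine ⟨f * h, hf.mul hh, hfa.comp hha, ?_⟩
      calc f * h * f * (f * h)⁻¹ = f * (h * f * h⁻¹) * f⁻¹ := by group
        _ = f⁻¹ := by rw [hrev]; group
  refine eq_one_of_reverses_of_strictMono (hf.mul hf) hk (hfa.comp hfa) hkm ?_
  calc k * (f * f) * k⁻¹ = (k * f * k⁻¹) * (k * f * k⁻¹) := by group
    _ = (f * f)⁻¹ := by rw [hkrev]; group

lemma StrictMono.perm_inv {α : Type*} [LinearOrder α] {g : Perm α} (hg : StrictMono g) :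
    StrictMono ⇑g⁻¹ :=
  fun x y hxy => hg.lt_iff_lt.1 (by simpa using hxy)

lemma lt_or_gt_of_forall_ne {g : ℝ → ℝ} (hgc : Continuous g) {I : Set ℝ} (hI : IsPreconnected I)
    (hfree : ∀ x ∈ I, g x ≠ x) : (∀ x ∈ I, x < g x) ∨ ∀ x ∈ I, g x < x := by
  by_contra! hne
  obtain ⟨⟨a, ha, hga⟩, b, hb, hgb⟩ := hne
  obtain ⟨x, hx, hgx⟩ := hI.intermediate_value₂ ha hb hgc.continuousOn continuousOn_id hga hgb
  exact hfree x hx hgx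

/-- The supremum of a bounded orbit would be a fixed point of `g`. -/
lemma exists_lt_iterate {g : ℝ → ℝ} (hgm : Monotone g) (hgc : Continuous g) {I : Set ℝ}
    (hI : I.OrdConnected) (hlt : ∀ x ∈ I, x < g x) {x y : ℝ}
    (hx : x ∈ I) (hy : y ∈ I) : ∃ n, y < g^[n] x := by
  by_contra! hle
  have hbdd : BddAbove (range fun n => g^[n] x) := ⟨y, forall_mem_range.2 hle⟩
  have hs : ⨆ n, g^[n] x ∈ I := hI.out hx hy ⟨le_ciSup hbdd 0, ciSup_le hle⟩
  refine (hlt _ hs).not_ge ?_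
  rw [hgm.map_ciSup_of_continuousAt hgc.continuousAt hbdd]
  exact ciSup_le fun n => by simpa only [Function.iterate_succ_apply'] using le_ciSup hbdd (n + 1)

/-- The intervals `(gⁿ a, gⁿ⁺¹ a)` are disjoint, and each contains a point `gⁿ y` moved by `c`
between two fixed points of `c`, hence a point where `c` is not locally affine. -/
lemma breakpoints_infinite_of_commute {g c : ℝ → ℝ} (hgm : StrictMono g)
    (hcg : Function.Commute c g) (hcc : Continuous c) {a y : ℝ} (hay : a < y) (hyg : y < g a) (hca : c a = a)
    (hcy : c y ≠ y) : (breakpoints c).Infinite := by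
  have hfix : ∀ n z, c z = z → c (g^[n] z) = g^[n] z := fun n z hz => by
    rw [(hcg.iterate_right n).eq, hz]
  have hbreak : ∀ n, ∃ t ∈ Ioo (g^[n] a) (g^[n + 1] a), t ∈ breakpoints c := fun n => by
    rw [Function.iterate_succ_apply]
    refine exists_mem_breakpoints_of_fixed hcc (hgm.iterate n (hay.trans hyg)) (hfix n a hca)
      (hfix n _ (by rw [hcg.eq, hca])) ⟨hgm.iterate n hay, hgm.iterate n hyg⟩ fun h => hcy ?_
    exact hgm.injective.iterate n (by rwa [← (hcg.iterate_right n).eq])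
  choose t ht hbad using hbreak
  exact infinite_of_injective_forall_mem
    (strictMono_nat_of_lt_succ fun n => (ht n).2.trans (ht (n + 1)).1).injective hbad

lemma eqOn_id_of_commute_of_lt {g c : ℝ → ℝ} (hgm : StrictMono g) (hgc : Continuous g)
    {I : Set ℝ} (hI : I.OrdConnected) (hgI : MapsTo g I I) (hlt : ∀ x ∈ I, x < g x)
    (hcc : Continuous c) (hc : (breakpoints c).Finite) (hcg : Function.Commute c g)
    {p : ℝ} (hp : p ∈ I) (hcp : c p = p) : EqOn c id I := by
  intro x hx
  by_contra hcx
  obtain ⟨m, hm⟩ := exists_lt_iterate hgm.monotone hgc hI hlt hx hp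
  have hcy : c (g^[m] x) ≠ g^[m] x := fun h =>
    hcx (hgm.injective.iterate m (by rwa [← (hcg.iterate_right m).eq]))
  have hex := exists_lt_iterate hgm.monotone hgc hI hlt hp (hgI.iterate m hx)
  obtain ⟨n, hn⟩ := Nat.exists_eq_succ_of_ne_zero (n := Nat.find hex) fun h0 =>
    hm.not_gt (by simpa [h0] using Nat.find_spec hex)
  have hle : g^[n] p ≤ g^[m] x := not_lt.1 (Nat.find_min hex (by omega))
  have hlt' : g^[m] x < g (g^[n] p) := by
    rw [← Function.iterate_succ_apply' g n p, ← hn]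
    exact Nat.find_spec hex
  have hca : c (g^[n] p) = g^[n] p := by rw [(hcg.iterate_right n).eq, hcp]
  exact breakpoints_infinite_of_commute hgm hcg hcc (hle.lt_of_ne fun h => hcy (h ▸ hca)) hlt' hca
    hcy hc

lemma eqOn_id_of_commute {g c : Perm ℝ} (hg : IsHomeo g) (hgm : StrictMono g) {I : Set ℝ}
    (hI : I.OrdConnected) (hgI : ∀ x, g x ∈ I ↔ x ∈ I) (hfree : ∀ x ∈ I, g x ≠ x)
    (hc : InPLF c) (hcg : Commute c g) {p : ℝ} (hp : p ∈ I) (hcp : c p = p) :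
    EqOn c id I := by
  have hginvI : ∀ x ∈ I, g⁻¹ x ∈ I := fun x hx => (hgI _).1 (by simpa using hx)
  rcases lt_or_gt_of_forall_ne hg.1 hI.isPreconnected hfree with hlt | hgt
  · exact eqOn_id_of_commute_of_lt hgm hg.1 hI (fun x hx => (hgI x).2 hx) hlt hc.1.1 hc.2
      (fun x => DFunLike.congr_fun hcg.eq x) hp hcp
  · refine eqOn_id_of_commute_of_lt hgm.perm_inv hg.2 hI hginvI (fun x hx => ?_) hc.1.1 hc.2
      (fun x => DFunLike.congr_fun hcg.inv_right.eq x) hp hcp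
    simpa using hgt _ (hginvI x hx)

def IsStronglyReversiblePLF (f : Perm ℝ) : Prop :=
  ∃ σ : Perm ℝ, InPLF σ ∧ σ * σ = 1 ∧ σ * f * σ = f⁻¹

lemma IsStronglyReversiblePLF.of_mul_self_eq_one {f : Perm ℝ} (hff : f * f = 1) :
    IsStronglyReversiblePLF f :=
  ⟨1, InPLF.one, mul_one 1, by rw [one_mul, mul_one]; exact eq_inv_of_mul_eq_one_left hff⟩

lemma breakpoints_ite_subset (g₁ g₂ : ℝ → ℝ) (v : ℝ) :
    breakpoints (fun y => if y ≤ v then g₁ y else g₂ y) ⊆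
      breakpoints g₁ ∪ breakpoints g₂ ∪ {v} := by
  intro x hx
  rcases lt_trichotomy x v with hxv | rfl | hvx
  · exact Or.inl <| Or.inl fun hg => hx <|
      hg.congr ((eventually_lt_nhds hxv).mono fun y hy => if_pos hy.le)
  · exact Or.inr rfl
  · exact Or.inl <| Or.inr fun hg => hx <|
      hg.congr ((eventually_gt_nhds hvx).mono fun y hy => if_neg hy.not_ge)

noncomputable def foldAt (h : Perm ℝ) (v : ℝ) (x : ℝ) : ℝ :=
  if x ≤ v then h x else h⁻¹ x

lemma foldAt_involutive {h : Perm ℝ} (hha : StrictAnti h) {v : ℝ} (hv : h v ≤ v)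
    (hinv : ∀ x ∈ Icc (h v) v, h (h x) = x) : Function.Involutive (foldAt h v) := by
  have hhv : h (h v) = v := hinv v ⟨hv, le_rfl⟩
  intro x
  rcases le_or_gt x v with hxv | hvx
  · by_cases hhx : h x ≤ v
    · simp only [foldAt, if_pos hxv, if_pos hhx]
      exact hinv x ⟨hha.le_iff_ge.1 (hhx.trans_eq hhv.symm), hxv⟩
    · simp [foldAt, if_pos hxv, if_neg hhx]
  · have : h⁻¹ x ≤ v := (hha.le_iff_ge.1 (by simpa [hhv] using hvx.le)).trans hv
    simp only [foldAt, if_neg hvx.not_ge, if_pos this]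
    simp

lemma continuous_foldAt {h : Perm ℝ} (hh : IsHomeo h) {v : ℝ} (hhv : h (h v) = v) :
    Continuous (foldAt h v) :=
  Continuous.if_le hh.1 hh.2 continuous_id continuous_const fun x (hx : x = v) => by
    rw [hx, Perm.eq_inv_iff_eq, hhv]

lemma foldAt_apply_of_reverses {f h : Perm ℝ} (hfm : StrictMono f) (hrev : h * f * h⁻¹ = f⁻¹)
    {v : ℝ} (hfv : f v = v) (x : ℝ) : foldAt h v (f x) = f⁻¹ (foldAt h v x) := by
  have hrev' : h⁻¹ * f * h⁻¹⁻¹ = f⁻¹ := by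
    conv_lhs => rw [← inv_inv f, ← hrev]
    group
  have hxf : f x ≤ v ↔ x ≤ v := by simpa only [hfv] using hfm.le_iff_le (a := x) (b := v)
  by_cases hx : x ≤ v
  · simp only [foldAt, if_pos hx, if_pos (hxf.2 hx)]
    exact reverses_apply hrev x
  · simp only [foldAt, if_neg hx, if_neg (mt hxf.1 hx)]
    exact reverses_apply hrev' x

lemma IsStronglyReversiblePLF.of_foldAt {f h : Perm ℝ} (hh : InPLF h) (hfm : StrictMono f)
    (hha : StrictAnti h) (hrev : h * f * h⁻¹ = f⁻¹) {v : ℝ} (hfv : f v = v) (hv : h v ≤ v)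
    (hinv : ∀ x ∈ Icc (h v) v, h (h x) = x) : IsStronglyReversiblePLF f := by
  have hσ := foldAt_involutive hha hv hinv
  have hcont := continuous_foldAt hh.1 (hinv v ⟨hv, le_rfl⟩)
  have hσσ : hσ.toPerm * hσ.toPerm = 1 := Equiv.ext hσ
  have hσf : hσ.toPerm * f = f⁻¹ * hσ.toPerm := Equiv.ext (foldAt_apply_of_reverses hfm hrev hfv)
  refine ⟨hσ.toPerm, ⟨⟨hcont, hcont⟩, ((hh.2.union hh.inv.2).union (finite_singleton v)).subset
    (breakpoints_ite_subset _ _ v)⟩, hσσ, ?_⟩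
  rw [hσf, mul_assoc, hσσ, mul_one]

lemma exists_fixed_of_antitone {h : ℝ → ℝ} (hc : Continuous h) (ha : Antitone h) :
    ∃ p, h p = p := by
  rcases le_total 0 (h 0) with h0 | h0
  · obtain ⟨p, -, hp⟩ := isPreconnected_univ.intermediate_value₂ (mem_univ 0) (mem_univ (h 0))
      continuousOn_id hc.continuousOn h0 (ha h0)
    exact ⟨p, hp.symm⟩
  · exact (isPreconnected_univ.intermediate_value₂ (mem_univ 0) (mem_univ (h 0))
      hc.continuousOn continuousOn_id h0 (ha h0)).imp fun _ => And.right

lemma exists_Ioo_gap {F : Set ℝ} (hF : IsClosed F) {p : ℝ} (hp : p ∉ F) (hl : ∃ a ∈ F, a ≤ p)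
    (hr : ∃ b ∈ F, p ≤ b) : ∃ u ∈ F, ∃ v ∈ F, p ∈ Ioo u v ∧ ∀ x ∈ Ioo u v, x ∉ F := by
  have hbl : BddAbove (F ∩ Iic p) := ⟨p, fun _ hx => hx.2⟩
  have hbr : BddBelow (F ∩ Ici p) := ⟨p, fun _ hx => hx.2⟩
  have hu := (hF.inter isClosed_Iic).csSup_mem hl hbl
  have hv := (hF.inter isClosed_Ici).csInf_mem hr hbr
  refine ⟨_, hu.1, _, hv.1, ⟨hu.2.lt_of_ne fun h => hp (h ▸ hu.1),
    hv.2.lt_of_ne' fun h => hp (h ▸ hv.1)⟩, fun x hx hxF => ?_⟩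
  rcases le_total x p with hxp | hpx
  · exact (le_csSup hbl ⟨hxF, hxp⟩).not_gt hx.1
  · exact (csInf_le hbr ⟨hxF, hpx⟩).not_gt hx.2

lemma StrictMono.mem_Ioo_iff {f : ℝ → ℝ} (hf : StrictMono f) {u v : ℝ} (hu : f u = u)
    (hv : f v = v) (x : ℝ) : f x ∈ Ioo u v ↔ x ∈ Ioo u v := by
  conv_lhs => rw [← hu, ← hv]
  exact and_congr hf.lt_iff_lt hf.lt_iff_lt

lemma exists_foldAt_point {f h : Perm ℝ} (hf : InPLF f) (hh : InPLF h) (hfm : StrictMono f)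
    (hha : StrictAnti h) (hrev : h * f * h⁻¹ = f⁻¹) {p : ℝ} (hp : h p = p) (hfp : f p ≠ p)
    {q : ℝ} (hq : f q = q) : ∃ v, f v = v ∧ h v ≤ v ∧ ∀ x ∈ Icc (h v) v, h (h x) = x := by
  obtain ⟨u, hu, v, hv, ⟨hup, hpv⟩, hgap⟩ : ∃ u, f u = u ∧ ∃ v, f v = v ∧ p ∈ Ioo u v ∧
      ∀ x ∈ Ioo u v, f x ≠ x := by
    have hhq := apply_eq_self_of_reverses hrev hq
    refine exists_Ioo_gap (isClosed_eq hf.1.1 continuous_id) hfp ?_ ?_ <;>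
      rcases le_total q p with hqp | hpq
    exacts [⟨q, hq, hqp⟩, ⟨h q, hhq, hp ▸ hha.antitone hpq⟩, ⟨h q, hhq, hp ▸ hha.antitone hqp⟩,
      ⟨q, hq, hpq⟩]
  have huv : u < v := hup.trans hpv
  have hId : EqOn (h * h) id (Icc u v) := (eqOn_id_of_commute hf.1 hfm ordConnected_Ioo
      (hfm.mem_Ioo_iff hu hv) hgap (hh.mul hh) (commute_mul_self_of_reverses hrev) ⟨hup, hpv⟩
      (by simp [hp])).of_subset_closure (hh.mul hh).1.1.continuousOn continuousOn_id
      Ioo_subset_Icc_self (closure_Ioo huv.ne).ge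
  have hhv : h v ≤ u := not_lt.1 fun hlt =>
    hgap _ ⟨hlt, (hp ▸ hha hpv).trans hpv⟩ (apply_eq_self_of_reverses hrev hv)
  have hhu : v ≤ h u := not_lt.1 fun hlt =>
    hgap _ ⟨hup.trans (hp ▸ hha hup), hlt⟩ (apply_eq_self_of_reverses hrev hu)
  have hhhv : h (h v) = v := hId (right_mem_Icc.2 huv.le)
  obtain rfl : h v = u :=
    (h.injective ((le_antisymm (hhhv ▸ hha.antitone hhv) hhu).trans hhhv.symm)).symm
  exact ⟨v, hv, hhv.trans huv.le, fun x hx => hId hx⟩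

lemma IsStronglyReversiblePLF.of_strictMono_of_strictAnti {f h : Perm ℝ} (hf : InPLF f)
    (hh : InPLF h) (hfm : StrictMono f) (hha : StrictAnti h) (hrev : h * f * h⁻¹ = f⁻¹) :
    IsStronglyReversiblePLF f := by
  obtain ⟨p, hp⟩ := exists_fixed_of_antitone hh.1.1 hha.antitone
  by_cases hfp : f p = p
  · exact .of_foldAt hh hfm hha hrev hfp hp.le fun x hx => by
      rw [le_antisymm hx.2 (hp ▸ hx.1), hp, hp]
  by_cases hF : ∃ q, f q = q
  · obtain ⟨q, hq⟩ := hF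
    obtain ⟨v, hfv, hv, hinv⟩ := exists_foldAt_point hf hh hfm hha hrev hp hfp hq
    exact .of_foldAt hh hfm hha hrev hfv hv hinv
  · push Not at hF
    have hhh : h * h = 1 := Equiv.ext fun x => eqOn_id_of_commute hf.1 hfm ordConnected_univ
      (fun _ => iff_of_true trivial trivial) (fun x _ => hF x) (hh.mul hh)
      (commute_mul_self_of_reverses hrev) (mem_univ p) (by simp [hp]) (mem_univ x)
    exact ⟨h, hh, hhh, by rwa [inv_eq_of_mul_eq_one_right hhh] at hrev⟩

/-- In PLF(ℝ), reversibility and strong reversibility are equivalent. -/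
theorem stmt_6 (f : Equiv.Perm ℝ) (hf : InPLF f) :
    (∃ h : Equiv.Perm ℝ, InPLF h ∧ h * f * h⁻¹ = f⁻¹) ↔
    (∃ σ : Equiv.Perm ℝ, InPLF σ ∧ σ * σ = 1 ∧ σ * f * σ = f⁻¹) := by
  refine ⟨fun ⟨h, hh, hrev⟩ => ?_, fun ⟨σ, hσ, hσσ, hσf⟩ =>
    ⟨σ, hσ, by rwa [inv_eq_of_mul_eq_one_right hσσ]⟩⟩
  rcases hf.strictMono_or_strictAnti with hfm | hfa
  · rcases hh.strictMono_or_strictAnti with hhm | hha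
    · rw [eq_one_of_reverses_of_strictMono hf hh hfm hhm hrev]
      exact IsStronglyReversiblePLF.of_mul_self_eq_one (one_mul 1)
    · exact IsStronglyReversiblePLF.of_strictMono_of_strictAnti hf hh hfm hha hrev
  · exact IsStronglyReversiblePLF.of_mul_self_eq_one
      (mul_self_eq_one_of_reverses_of_strictAnti hf hh hfa hrev)
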